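/- arXiv:1311.6988 — 7 statements merged into one kernel-verified Lean document; each statement's English description precedes it below -/
import Mathlib

section
/- There exists a computable function B : List Bool → Bool such that: (1) for every computable γ : ℕ → Bool there exists n with B (γ↾n) = true; and (2) for every m there exists γ : ℕ → Bool with B (γ↾n) = false for all n ≤ m. In words: there is a decidable bar on the computable points of Cantor space no finite truncation of which bars Cantor space (Kleene's Alternative holds in the computable model; content of Theorem 2.1, BIM + CT ⊢ KA). -/
/-!
Let `φₑ` be the `e`-th partial recursive function. The bar accepts a finite sequence `s` once
`|s|` steps of computation show that `φₑ(e)` halts with output `s[e]` for some `e < |s|`; this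
is a primitive recursive test. A computable `γ` is `φₑ` for some index `e`, so `γ` agrees with
the diagonal `e ↦ φₑ(e)` at its own index and `γ↾k` is barred once `φₑ(e)` halts within `k`
steps. Conversely, the sequence that disagrees with every value of the diagonal found within
`m` steps has no initial segment of length `≤ m` in the bar.
-/

/-- The first `n` values of `γ` as a list. -/
def seg (γ : ℕ → Bool) (n : ℕ) : List Bool := List.ofFn fun i : Fin n => γ i

open Nat.Partrec (Code)
open Nat.Partrec.Code Encodable

/-- The diagonal `e ↦ φₑ(e)`, as far as it is known after `k` steps of computation. -/
def diagonalApprox (k e : ℕ) : Option ℕ := evaln k (Denumerable.ofNat Code e) e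

theorem primrec₂_diagonalApprox : Primrec₂ diagonalApprox :=
  primrec_evaln.comp <|
    (Primrec.fst.pair ((Primrec.ofNat Code).comp Primrec.snd)).pair Primrec.snd

theorem diagonalApprox_mono {k k' e v : ℕ} (hk : k ≤ k') (h : diagonalApprox k e = some v) :
    diagonalApprox k' e = some v :=
  evaln_mono hk h

theorem lt_of_diagonalApprox_eq_some {k e v : ℕ} (h : diagonalApprox k e = some v) : e < k :=
  evaln_bound h

theorem exists_diagonalApprox_eq_encode {α : Type*} [Primcodable α] {f : ℕ → α}
    (hf : Computable f) : ∃ e k, diagonalApprox k e = some (encode (f e)) := by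
  obtain ⟨c, hc⟩ := exists_code.1 (Partrec.nat_iff.1 (Computable.encode.comp hf))
  have hmem : encode (f (encode c)) ∈ c.eval (encode c) := by simp [hc]
  obtain ⟨k, hk⟩ := evaln_complete.1 hmem
  exact ⟨encode c, k, by simpa [diagonalApprox] using hk⟩

def diagonalBar (s : List Bool) : Bool :=
  decide (∃ e < s.length, diagonalApprox s.length e = some (encode (s.getD e false)))

theorem primrec_diagonalBar : Primrec diagonalBar := by
  have hagree : PrimrecRel fun (e : ℕ) (s : List Bool) =>
      diagonalApprox s.length e = some (encode (s.getD e false)) :=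
    Primrec.eq.comp (primrec₂_diagonalApprox.comp (Primrec.list_length.comp Primrec.snd)
        Primrec.fst)
      (Primrec.option_some.comp <| Primrec.encode.comp <|
        (Primrec.list_getD false).comp Primrec.snd Primrec.fst)
  have hbar : PrimrecPred fun s : List Bool =>
      ∃ e < s.length, diagonalApprox s.length e = some (encode (s.getD e false)) :=
    (hagree.exists_mem_list.comp (Primrec.list_range.comp Primrec.list_length)
      Primrec.id).of_eq (by simp)
  exact hbar.decide

theorem seg_length (γ : ℕ → Bool) (n : ℕ) : (seg γ n).length = n := by
  simp [seg]

theorem seg_getD (γ : ℕ → Bool) {n e : ℕ} (h : e < n) (d : Bool) : (seg γ n).getD e d = γ e := by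
  simp [seg, List.getD_eq_getElem?_getD, h]

theorem diagonalBar_seg_eq_true {γ : ℕ → Bool} {e k : ℕ}
    (h : diagonalApprox k e = some (encode (γ e))) : diagonalBar (seg γ k) = true := by
  have he := lt_of_diagonalApprox_eq_some h
  exact decide_eq_true ⟨e, by rwa [seg_length], by rwa [seg_length, seg_getD γ he]⟩

def antidiagonal (m e : ℕ) : Bool := decide (diagonalApprox m e ≠ some 1)

theorem diagonalApprox_ne_encode_antidiagonal (m e : ℕ) :
    diagonalApprox m e ≠ some (encode (antidiagonal m e)) := by
  unfold antidiagonal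
  by_cases h : diagonalApprox m e = some 1 <;> simp [h]

theorem diagonalBar_seg_antidiagonal {m n : ℕ} (hn : n ≤ m) :
    diagonalBar (seg (antidiagonal m) n) = false := by
  refine decide_eq_false fun ⟨e, he, h⟩ => ?_
  rw [seg_length] at he h
  rw [seg_getD _ he] at h
  exact diagonalApprox_ne_encode_antidiagonal m e (diagonalApprox_mono hn h)

/-- Kleene's Alternative holds in the computable model (Theorem 2.1, BIM + CT ⊢ KA):
there is a computable decidable bar on the computable points of Cantor space
no finite truncation of which bars Cantor space. -/
theorem kleene_alternative_computable :
    ∃ B : List Bool → Bool, Computable B ∧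
      (∀ γ : ℕ → Bool, Computable γ → ∃ n, B (seg γ n) = true) ∧
      (∀ m : ℕ, ∃ γ : ℕ → Bool, ∀ n ≤ m, B (seg γ n) = false) := by
  refine ⟨diagonalBar, primrec_diagonalBar.to_comp, fun γ hγ => ?_,
    fun m => ⟨antidiagonal m, fun n hn => diagonalBar_seg_antidiagonal hn⟩⟩
  obtain ⟨e, k, h⟩ := exists_diagonalApprox_eq_encode hγ
  exact ⟨k, diagonalBar_seg_eq_true h⟩
end

section
/- For every e : ℕ → ℕ → ℕ such that E 0 e and E 1 e are disjoint, there exists B : List Bool → Bool such that: (a) for every m there exists a list s : List Bool of length m with B (s.take k) = false for all k ≤ m; and (b) every γ : ℕ → Bool satisfying B (γ↾n) = false for all n separates the two sets: for every n, if γ n = false then n ∉ E 0 e, and if γ n = true then n ∉ E 1 e. (The separating-tree construction from the proof of Theorem 3.1, WKL ⟹ Σ⁰₁-Separation.) -/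
/-- The `n`-th set enumerated by `e`. -/
def E (n : ℕ) (e : ℕ → ℕ → ℕ) : Set ℕ := {k | ∃ p, e n p = k + 1}

/-!
A finite string `s` is cut from the tree once some position `k < |s|` carrying the label `b`
is seen, within `|s|` steps, to be enumerated into `E b.toNat`. An infinite path therefore never
labels `n` by `b` when `n ∈ E b.toNat`, i.e. it separates `E 0` from `E 1`. Conversely the tree
has nodes of every length: label `i < m` by whether `i` has entered `E 0` within `m` steps;
such a string can only be cut at a position of `E 0 ∩ E 1`, which is empty.
-/

def refuted (e : ℕ → ℕ → ℕ) (s : List Bool) : Bool :=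
  decide (∃ k : Fin s.length, ∃ p < s.length, e s[k].toNat p = k + 1)

def stageLabelling (e : ℕ → ℕ → ℕ) (m : ℕ) : List Bool :=
  List.ofFn fun i : Fin m => decide (∃ p < m, e 0 p = i + 1)

variable {e : ℕ → ℕ → ℕ}

theorem refuted_eq_false_iff {s : List Bool} :
    refuted e s = false ↔ ∀ k (hk : k < s.length), ∀ p < s.length, e s[k].toNat p ≠ k + 1 := by
  simp [refuted, Fin.forall_iff]

theorem refuted_take_eq_false {s : List Bool} (hs : refuted e s = false) (k : ℕ) :
    refuted e (s.take k) = false := by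
  rw [refuted_eq_false_iff] at hs ⊢
  intro i hi p hp
  simp only [List.length_take, lt_min_iff] at hi hp
  simpa using hs i hi.2 p hp.2

theorem refuted_stageLabelling (hdisj : Disjoint (E 0 e) (E 1 e)) (m : ℕ) :
    refuted e (stageLabelling e m) = false := by
  rw [refuted_eq_false_iff]
  intro i hi p hp
  simp only [stageLabelling, List.length_ofFn] at hi hp
  simp only [stageLabelling, List.getElem_ofFn]
  by_cases hE0 : ∃ q < m, e 0 q = i + 1
  · rw [decide_eq_true hE0]
    obtain ⟨q, -, hq⟩ := hE0
    exact fun hp1 => Set.disjoint_left.1 hdisj ⟨q, hq⟩ ⟨p, hp1⟩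
  · rw [decide_eq_false hE0]
    exact fun hp0 => hE0 ⟨p, hp, hp0⟩

theorem notMem_E_of_refuted_seg_eq_false {γ : ℕ → Bool} (hγ : ∀ n, refuted e (seg γ n) = false)
    (n : ℕ) : n ∉ E (γ n).toNat e := by
  rintro ⟨p, hp⟩
  have hlen : (seg γ (max (n + 1) (p + 1))).length = max (n + 1) (p + 1) := List.length_ofFn
  refine refuted_eq_false_iff.1 (hγ (max (n + 1) (p + 1))) n (by omega) p (by omega) ?_
  simpa [seg, -List.ofFn_succ] using hp

/-- The separating-tree construction from the proof of Theorem 3.1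
(WKL ⟹ Σ⁰₁-Separation). -/
theorem separating_tree (e : ℕ → ℕ → ℕ)
    (hdisj : ∀ k : ℕ, ¬ (k ∈ E 0 e ∧ k ∈ E 1 e)) :
    ∃ B : List Bool → Bool,
      (∀ m : ℕ, ∃ s : List Bool, s.length = m ∧ ∀ k ≤ m, B (s.take k) = false) ∧
      (∀ γ : ℕ → Bool, (∀ n, B (seg γ n) = false) →
        ∀ n : ℕ, (γ n = false → n ∉ E 0 e) ∧ (γ n = true → n ∉ E 1 e)) := by
  have hE : Disjoint (E 0 e) (E 1 e) := Set.disjoint_left.2 fun k h0 h1 => hdisj k ⟨h0, h1⟩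
  refine ⟨refuted e, fun m => ⟨stageLabelling e m, List.length_ofFn, fun k _ =>
    refuted_take_eq_false (refuted_stageLabelling hE m) k⟩, fun γ hγ n => ?_⟩
  have hn := notMem_E_of_refuted_seg_eq_false hγ n
  constructor <;> intro h <;> simpa [h] using hn
end

section
/- Path-construction lemma (core of the proofs of Theorems 3.1, 4.1 and 8.1): let B : List Bool → Bool, define Sec as below, and let g : List Bool → Bool satisfy: for all s : List Bool and n : ℕ, if Sec n (s ++ [g s]) then Sec n (s ++ [!(g s)]). Define δ : ℕ → Bool recursively by δ n = g (δ↾n). Then for every n, if B (δ↾n) = true then Sec n []. Consequently, if the empty list is not n-secured by B for any n, then δ is an infinite path avoiding B entirely. -/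
/-- `Sec B n s`: the finite sequence `s` is `n`-secured by the bar `B`. -/
def Sec (B : List Bool → Bool) : ℕ → List Bool → Prop
  | 0, s => ∃ n ≤ s.length, B (s.take n) = true
  | k + 1, s => Sec B k (s ++ [false]) ∧ Sec B k (s ++ [true])

/-!
The hypothesis on `g` says that `g s` never picks the `k`-secured child of `s` when the other
child is not, so if `s ++ [g s]` is `k`-secured then both children are and `s` is
`(k+1)`-secured. Walking the path `δ` backwards from a node `δ↾n` in the bar, which is `0`-secured, therefore raises the
security level by one per step and ends with `Sec n []`.
-/

lemma seg_zero (γ : ℕ → Bool) : seg γ 0 = [] := rfl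

lemma seg_succ (γ : ℕ → Bool) (n : ℕ) : seg γ (n + 1) = seg γ n ++ [γ n] := by
  rw [seg, List.ofFn_succ', List.concat_eq_append]
  rfl

section Secured

variable {B : List Bool → Bool}

lemma sec_zero_of_apply_eq_true {s : List Bool} (h : B s = true) : Sec B 0 s :=
  ⟨s.length, le_rfl, by rwa [List.take_length]⟩

variable {g : List Bool → Bool}

lemma sec_succ_of_sec_append_choice
    (hg : ∀ (s : List Bool) (n : ℕ), Sec B n (s ++ [g s]) → Sec B n (s ++ [!(g s)]))
    {s : List Bool} {k : ℕ} (h : Sec B k (s ++ [g s])) : Sec B (k + 1) s := by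
  have h' := hg s k h
  cases hgs : g s <;> simp only [hgs, Bool.not_false, Bool.not_true] at h h'
  exacts [⟨h, h'⟩, ⟨h', h⟩]

lemma sec_add_of_sec_seg
    (hg : ∀ (s : List Bool) (n : ℕ), Sec B n (s ++ [g s]) → Sec B n (s ++ [!(g s)]))
    {δ : ℕ → Bool} (hδ : ∀ n, δ n = g (seg δ n)) :
    ∀ {k m : ℕ}, Sec B k (seg δ m) → Sec B (k + m) []
  | k, 0, h => by rwa [seg_zero] at h
  | k, m + 1, h => by
    rw [seg_succ, hδ m] at h
    rw [← Nat.succ_add_eq_add_succ]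
    exact sec_add_of_sec_seg hg hδ (sec_succ_of_sec_append_choice hg h)

end Secured

/-- Path-construction lemma (core of the proofs of Theorems 3.1, 4.1 and 8.1). -/
theorem path_construction (B : List Bool → Bool) (g : List Bool → Bool)
    (hg : ∀ (s : List Bool) (n : ℕ), Sec B n (s ++ [g s]) → Sec B n (s ++ [!(g s)]))
    (δ : ℕ → Bool) (hδ : ∀ n, δ n = g (seg δ n)) :
    (∀ n, B (seg δ n) = true → Sec B n []) ∧
      ((∀ m, ¬ Sec B m []) → ∀ n, B (seg δ n) = false) := by
  have secured : ∀ n, B (seg δ n) = true → Sec B n [] := fun n hB => by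
    simpa using sec_add_of_sec_seg hg hδ (sec_zero_of_apply_eq_true hB)
  exact ⟨secured, fun unsecured n => Bool.eq_false_iff.mpr fun hB => unsecured n (secured n hB)⟩
end

section
/- Determinacy of finite games (Theorem 9.2): let n l : ℕ with 0 < l and let X be a set of plays s : Fin n → Fin l, where player I makes the moves at even indices and player II at odd indices. Say s I-obeys σ : List (Fin l) → Fin l if for all i with 2*i < n, s (2*i) = σ [s 0, …, s (2*i−1)], and s II-obeys τ : List (Fin l) → Fin l if for all i with 2*i+1 < n, s (2*i+1) = τ [s 0, …, s (2*i)]. Then: (I-determinacy) if for every τ there exists s ∈ X with s II-obeying τ, then there exists σ such that every s I-obeying σ lies in X; and (II-determinacy) if for every σ there exists s ∈ X with s I-obeying σ, then there exists τ such that every s II-obeying τ lies in X. -/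
/-!
Zermelo's backward induction. Whether the player moving at the indices in `P` can force the
play into `W` from a given position is decided recursively on the number of remaining moves.
Negating this predicate swaps `∃` and `∀` at every move, so it becomes the same predicate for the
opponent and the complement of `W`: exactly one of the two players can force the outcome from
the start. A player who can force it keeps doing so by always choosing a move that preserves
the property, and a play following that choice lands in the target set.
-/

/-- The play `s` (of length `n`) I-obeys the strategy `σ`: at every even index,
the move is the one prescribed by `σ` applied to the list of previous moves. -/
def ObeysI (n l : ℕ) (s : Fin n → Fin l) (σ : List (Fin l) → Fin l) : Prop :=
  ∀ (i : ℕ) (h : 2 * i < n),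
    s ⟨2 * i, h⟩ = σ (List.ofFn fun j : Fin (2 * i) => s ⟨j, Nat.lt_trans j.isLt h⟩)

/-- The play `s` (of length `n`) II-obeys the strategy `τ`: at every odd index,
the move is the one prescribed by `τ` applied to the list of previous moves. -/
def ObeysII (n l : ℕ) (s : Fin n → Fin l) (τ : List (Fin l) → Fin l) : Prop :=
  ∀ (i : ℕ) (h : 2 * i + 1 < n),
    s ⟨2 * i + 1, h⟩ = τ (List.ofFn fun j : Fin (2 * i + 1) => s ⟨j, Nat.lt_trans j.isLt h⟩)

namespace FiniteGame

open List

variable {α : Type*} (P : ℕ → Prop) [DecidablePred P] (W : Set (List α))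

/-- `CanForce P W m p`: from position `p`, with `m` moves left, the player moving at the indices
satisfying `P` can force the final position into `W`. -/
def CanForce : ℕ → List α → Prop
  | 0, p => p ∈ W
  | m + 1, p => if P p.length then ∃ a, CanForce m (p ++ [a]) else ∀ a, CanForce m (p ++ [a])

theorem not_canForce_iff {m : ℕ} {p : List α} :
    ¬CanForce P W m p ↔ CanForce (fun k => ¬P k) Wᶜ m p := by
  induction m generalizing p with
  | zero => rfl
  | succ m ih =>
    by_cases hP : P p.length
    · simp only [CanForce, hP, if_true, not_true, if_false, not_exists, ih]
    · simp only [CanForce, hP, if_false, not_false_eq_true, if_true, not_forall, ih]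

def Follows {n : ℕ} (s : Fin n → α) (σ : List α → α) : Prop :=
  ∀ k (hk : k < n), P k → s ⟨k, hk⟩ = σ ((ofFn s).take k)

def Forces (n : ℕ) (σ : List α → α) : Prop :=
  ∀ s : Fin n → α, Follows P s σ → ofFn s ∈ W

noncomputable def forcingStrategy [Nonempty α] (n : ℕ) (q : List α) : α :=
  Classical.epsilon fun a => CanForce P W (n - (q.length + 1)) (q ++ [a])

theorem forces_forcingStrategy [Nonempty α] {n : ℕ} (h : CanForce P W n []) :
    Forces P W n (forcingStrategy P W n) := by
  intro s hs
  suffices ∀ m ≤ n, CanForce P W m ((ofFn s).take (n - m)) → ofFn s ∈ W from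
    this n le_rfl (by simpa using h)
  intro m
  induction m with
  | zero =>
    intro _ h
    rwa [CanForce, Nat.sub_zero, take_of_length_le (by simp)] at h
  | succ m ih =>
    intro hm h
    obtain ⟨k, rfl⟩ : ∃ k, n = k + (m + 1) := ⟨n - (m + 1), by omega⟩
    have hk : k < k + (m + 1) := by omega
    have hlen : ((ofFn s).take k).length = k := by simp; omega
    refine ih (by omega) ?_
    rw [show k + (m + 1) - m = k + 1 by omega,
      take_succ_eq_append_getElem (by simp), List.getElem_ofFn]
    rw [show k + (m + 1) - (m + 1) = k by omega, CanForce, hlen] at h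
    split_ifs at h with hP
    · rw [hs k hk hP, forcingStrategy, hlen, show k + (m + 1) - (k + 1) = m by omega]
      exact Classical.epsilon_spec h
    · exact h _

theorem exists_forces_or_exists_forces_compl [Nonempty α] (n : ℕ) :
    (∃ σ, Forces P W n σ) ∨ ∃ τ, Forces (fun k => ¬P k) Wᶜ n τ := by
  by_cases h : CanForce P W n []
  · exact .inl ⟨_, forces_forcingStrategy P W h⟩
  · exact .inr ⟨_, forces_forcingStrategy _ _ ((not_canForce_iff P W).mp h)⟩

end FiniteGame

open FiniteGame

theorem obeysI_iff_follows_even {n l : ℕ} {s : Fin n → Fin l} {σ : List (Fin l) → Fin l} :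
    ObeysI n l s σ ↔ Follows Even s σ := by
  simp only [ObeysI, Follows, even_iff_two_dvd]
  constructor
  · rintro hs k hk ⟨i, rfl⟩
    exact (hs i hk).trans (congrArg σ (Fin.ofFn_take_eq_take_ofFn hk.le s))
  · intro hs i hi
    exact (hs _ hi (dvd_mul_right 2 i)).trans
      (congrArg σ (Fin.ofFn_take_eq_take_ofFn hi.le s).symm)

theorem obeysII_iff_follows_odd {n l : ℕ} {s : Fin n → Fin l} {τ : List (Fin l) → Fin l} :
    ObeysII n l s τ ↔ Follows Odd s τ := by
  simp only [ObeysII, Follows]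
  constructor
  · rintro hs k hk ⟨i, rfl⟩
    exact (hs i hk).trans (congrArg τ (Fin.ofFn_take_eq_take_ofFn hk.le s))
  · intro hs i hi
    exact (hs _ hi (odd_two_mul_add_one i)).trans
      (congrArg τ (Fin.ofFn_take_eq_take_ofFn hi.le s).symm)

/-- Determinacy of finite games (Theorem 9.2). -/
theorem determinacy_of_finite_games (n l : ℕ) (hl : 0 < l)
    (X : Set (Fin n → Fin l)) :
    ((∀ τ : List (Fin l) → Fin l, ∃ s ∈ X, ObeysII n l s τ) →
      ∃ σ : List (Fin l) → Fin l, ∀ s, ObeysI n l s σ → s ∈ X) ∧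
    ((∀ σ : List (Fin l) → Fin l, ∃ s ∈ X, ObeysI n l s σ) →
      ∃ τ : List (Fin l) → Fin l, ∀ s, ObeysII n l s τ → s ∈ X) := by
  have : Nonempty (Fin l) := ⟨⟨0, hl⟩⟩
  have mem_X {s : Fin n → Fin l} : List.ofFn s ∈ List.ofFn '' X ↔ s ∈ X :=
    List.ofFn_injective.mem_set_image
  constructor
  · intro hII
    rcases exists_forces_or_exists_forces_compl Even (List.ofFn '' X) n with ⟨σ, hσ⟩ | ⟨τ, hτ⟩
    · exact ⟨σ, fun s hs => mem_X.mp (hσ s (obeysI_iff_follows_even.mp hs))⟩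
    · obtain ⟨s, hsX, hs⟩ := hII τ
      simp only [Nat.not_even_iff_odd] at hτ
      exact (hτ s (obeysII_iff_follows_odd.mp hs) (mem_X.mpr hsX)).elim
  · intro hI
    rcases exists_forces_or_exists_forces_compl Odd (List.ofFn '' X) n with ⟨τ, hτ⟩ | ⟨σ, hσ⟩
    · exact ⟨τ, fun s hs => mem_X.mp (hτ s (obeysII_iff_follows_odd.mp hs))⟩
    · obtain ⟨s, hsX, hs⟩ := hI σ
      simp only [Nat.not_odd_iff_even] at hσ
      exact (hσ s (obeysI_iff_follows_even.mp hs) (mem_X.mpr hsX)).elim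
end

section
/- Compactness of classical propositional logic, contrapositive form (the classical content of Theorem 11.3(i), FT ↔ 'every positively unrealizable enumerated set of formulas has an unrealizable finite initial part'): for every F : ℕ → PropForm, if every valuation γ : ℕ → Bool falsifies some formula in the list (∀ γ, ∃ n, eval γ (F n) = false), then there exists m such that every valuation falsifies some F n with n < m (∃ m, ∀ γ, ∃ n < m, eval γ (F n) = false). -/
/-!
Valuations form the Cantor space `ℕ → Bool`, which is compact. Each formula depends on finitely
many variables, so its truth value is continuous in the valuation; the hypothesis therefore says
that the open sets `{γ | eval γ (F n) = false}` cover the Cantor space, and a finite subcover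
gives the bound `m`.
-/

/-- Propositional formulas: variables, negation, finite conjunctions and disjunctions. -/
inductive PropForm : Type
  | var : ℕ → PropForm
  | neg : PropForm → PropForm
  | conj : List PropForm → PropForm
  | disj : List PropForm → PropForm

/-- Evaluation of a propositional formula under a valuation `γ`. -/
def eval (γ : ℕ → Bool) : PropForm → Bool
  | .var n => γ n
  | .neg φ => !(eval γ φ)
  | .conj L => L.attach.all (fun ⟨ψ, hψ⟩ => eval γ ψ)
  | .disj L => L.attach.any (fun ⟨ψ, hψ⟩ => eval γ ψ)
decreasing_by
  all_goals simp
  all_goals (have := List.sizeOf_lt_of_mem hψ; omega)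

section ListBool

variable {X α : Type*} [TopologicalSpace X] {f : X → α → Bool}

theorem Continuous.list_all (L : List α) (hf : ∀ a ∈ L, Continuous fun x => f x a) :
    Continuous fun x => L.all (f x) := by
  induction L with
  | nil => exact continuous_const
  | cons a L ih =>
    simp only [List.all_cons]
    exact (continuous_of_discreteTopology (f := fun p : Bool × Bool => p.1 && p.2)).comp₂
      (hf a List.mem_cons_self)
      (ih fun b hb => hf b (List.mem_cons_of_mem a hb))

theorem Continuous.list_any (L : List α) (hf : ∀ a ∈ L, Continuous fun x => f x a) :
    Continuous fun x => L.any (f x) := by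
  induction L with
  | nil => exact continuous_const
  | cons a L ih =>
    simp only [List.any_cons]
    exact (continuous_of_discreteTopology (f := fun p : Bool × Bool => p.1 || p.2)).comp₂
      (hf a List.mem_cons_self)
      (ih fun b hb => hf b (List.mem_cons_of_mem a hb))

end ListBool

theorem eval_conj (γ : ℕ → Bool) (L : List PropForm) : eval γ (.conj L) = L.all (eval γ) := by
  rw [eval]; simp [List.all_eq]

theorem eval_disj (γ : ℕ → Bool) (L : List PropForm) : eval γ (.disj L) = L.any (eval γ) := by
  rw [eval]; simp [List.any_eq]

theorem continuous_eval : ∀ φ : PropForm, Continuous fun γ : ℕ → Bool => eval γ φ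
  | .var n => by
      simp only [eval]
      exact continuous_apply n
  | .neg φ => by
      simp only [eval]
      exact (continuous_of_discreteTopology (f := not)).comp (continuous_eval φ)
  | .conj L => by
      simp only [eval_conj]
      exact Continuous.list_all L fun ψ _ => continuous_eval ψ
  | .disj L => by
      simp only [eval_disj]
      exact Continuous.list_any L fun ψ _ => continuous_eval ψ
termination_by φ => sizeOf φ
decreasing_by
  all_goals simp
  all_goals (have := List.sizeOf_lt_of_mem ‹_›; omega)

theorem CompactSpace.exists_forall_exists_lt_mem_of_isOpen_cover {X : Type*} [TopologicalSpace X]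
    [CompactSpace X] (U : ℕ → Set X) (hU : ∀ n, IsOpen (U n)) (hcover : ∀ x, ∃ n, x ∈ U n) :
    ∃ m, ∀ x, ∃ n < m, x ∈ U n := by
  obtain ⟨t, ht⟩ := isCompact_univ.elim_finite_subcover U hU fun x _ => Set.mem_iUnion.2 (hcover x)
  refine ⟨t.sup id + 1, fun x => ?_⟩
  obtain ⟨n, hn, hx⟩ := Set.mem_iUnion₂.1 (ht (Set.mem_univ x))
  exact ⟨n, Nat.lt_succ_of_le (Finset.le_sup (f := id) hn), hx⟩

/-- Compactness of classical propositional logic, contrapositive form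
(the classical content of Theorem 11.3(i)). -/
theorem compactness_propositional_logic (F : ℕ → PropForm)
    (h : ∀ γ : ℕ → Bool, ∃ n, eval γ (F n) = false) :
    ∃ m, ∀ γ : ℕ → Bool, ∃ n < m, eval γ (F n) = false :=
  CompactSpace.exists_forall_exists_lt_mem_of_isOpen_cover (fun n => {γ | eval γ (F n) = false})
    (fun n => (isOpen_discrete {false}).preimage (continuous_eval (F n))) h
end

section
/- The Approximate-Fan Theorem, classical form (the restricted AppFT of Section 12; constructively the conclusion is that the thin bar is almost-finite): let S : List ℕ → Bool be a spread-law that is an explicit approximate fan-law, i.e. there exists g : ℕ → ℕ such that for every n there is no injective f : Fin (g n) → List ℕ with (f i).length = n and S (f i) = true for all i. If A : List ℕ → Bool is a thin bar in F_S, then the set {t : List ℕ | A t = true} is finite. -/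
/-- The first `n` values of `α` as a list. -/
def segN (α : ℕ → ℕ) (n : ℕ) : List ℕ := List.ofFn fun i : Fin n => α i

/-- `S` is a spread-law. -/
def SpreadLaw (S : List ℕ → Bool) : Prop :=
  ∀ s : List ℕ, S s = true ↔ ∃ m, S (s ++ [m]) = true

/-- `A` is a thin bar in the spread `F_S`. -/
def ThinBar (S A : List ℕ → Bool) : Prop :=
  (∀ t, A t = true → S t = true) ∧
  (∀ t u, A t = true → A u = true → t <+: u → t = u) ∧
  (∀ α : ℕ → ℕ, (∀ n, S (segN α n) = true) → ∃ n, A (segN α n) = true)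

/-!
Since every level of an explicit approximate fan is finite, the spread `F_S` is a closed subset of
a product of finite sets, hence compact in Baire space. The basic open sets determined by the
nodes of a bar cover `F_S`, so finitely many of them suffice. Every node `a` of the bar lies on
some path of `F_S` (spread-laws extend every admissible node), that path passes through one of the
finitely many chosen nodes, and thinness forces that node to be `a`.
-/

theorem Set.finite_of_not_exists_injective_fin {X : Type*} {s : Set X} {k : ℕ}
    (h : ¬ ∃ f : Fin k → X, Function.Injective f ∧ ∀ i, f i ∈ s) : s.Finite := by
  by_contra hs
  set e := Set.Infinite.natEmbedding s hs
  exact h ⟨fun i => e i, Subtype.val_injective.comp (e.injective.comp Fin.val_injective),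
    fun i => (e i).2⟩

@[simp]
theorem length_segN (α : ℕ → ℕ) (n : ℕ) : (segN α n).length = n := List.length_ofFn

theorem segN_succ (α : ℕ → ℕ) (n : ℕ) : segN α (n + 1) = segN α n ++ [α n] := by
  rw [segN, List.ofFn_succ', List.concat_eq_append]
  rfl

theorem getD_segN {α : ℕ → ℕ} {i n : ℕ} (h : i < n) (d : ℕ) : (segN α n).getD i d = α i := by
  simp [segN, h]

theorem segN_prefix_segN (α : ℕ → ℕ) {m n : ℕ} (h : m ≤ n) : segN α m <+: segN α n := by
  induction n, h using Nat.le_induction with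
  | base => exact List.prefix_refl _
  | succ n _ ih => exact ih.trans (segN_succ α n ▸ List.prefix_append _ _)

theorem continuous_segN (n : ℕ) : Continuous (segN · n) :=
  continuous_of_discreteTopology.comp (f := fun (α : ℕ → ℕ) (i : Fin n) => α i)
    (continuous_pi fun _ => continuous_apply _)

theorem exists_segN_prefix_of_chain {β : ℕ → List ℕ} (hβ : ∀ n, β n <+: β (n + 1))
    (hlen : ∀ n, n < (β (n + 1)).length) : ∃ α : ℕ → ℕ, ∀ n, segN α n <+: β n := by
  set α : ℕ → ℕ := fun n => (β (n + 1)).getD n 0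
  refine ⟨α, fun n => ?_⟩
  induction n with
  | zero => exact List.nil_prefix
  | succ n ih =>
    have htake : segN α n = (β (n + 1)).take n := by
      simpa using List.prefix_iff_eq_take.1 (ih.trans (hβ n))
    rw [segN_succ, htake, show α n = _ from List.getD_eq_getElem _ _ (hlen n),
      List.take_concat_get']
    exact List.take_prefix _ _

def spread (S : List ℕ → Bool) : Set (ℕ → ℕ) := {α | ∀ n, S (segN α n) = true}

namespace SpreadLaw

variable {S : List ℕ → Bool}

theorem of_prefix (hS : SpreadLaw S) {t u : List ℕ} (ht : S t = true) (hu : u <+: t) :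
    S u = true := by
  obtain ⟨v, rfl⟩ := hu
  induction v using List.reverseRecOn with
  | nil => simpa using ht
  | append_singleton v m ih =>
    rw [← List.append_assoc] at ht
    exact ih ((hS _).2 ⟨m, ht⟩)

theorem exists_mem_spread_segN_eq (hS : SpreadLaw S) {s : List ℕ} (hs : S s = true) :
    ∃ α ∈ spread S, segN α s.length = s := by
  have hnext : ∀ t, ∃ m, S t = true → S (t ++ [m]) = true := fun t => by
    by_cases ht : S t = true
    · exact ((hS t).1 ht).imp fun _ hm _ => hm
    · exact ⟨0, fun h => absurd h ht⟩
  choose next hnext using hnext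
  set β : ℕ → List ℕ := fun k => (fun t => t ++ [next t])^[k] s
  have hβ_succ : ∀ k, β (k + 1) = β k ++ [next (β k)] := fun k =>
    Function.iterate_succ_apply' _ k s
  have hβS : ∀ k, S (β k) = true := fun k => by
    induction k with
    | zero => exact hs
    | succ k ih => rw [hβ_succ]; exact hnext _ ih
  have hβlen : ∀ k, (β k).length = s.length + k := fun k => by
    induction k with
    | zero => rfl
    | succ k ih => rw [hβ_succ, List.length_append, ih]; rfl
  have hsβ : ∀ k, s <+: β k := fun k => by
    induction k with
    | zero => exact List.prefix_refl s
    | succ k ih => exact ih.trans (hβ_succ k ▸ List.prefix_append _ _)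
  obtain ⟨α, hα⟩ := exists_segN_prefix_of_chain (fun k => hβ_succ k ▸ List.prefix_append _ _)
    (fun k => by rw [hβlen]; omega)
  refine ⟨α, fun n => hS.of_prefix (hβS n) (hα n), ?_⟩
  have hprefix := List.prefix_of_prefix_length_le (hα s.length) (hsβ s.length) (by simp)
  exact hprefix.eq_of_length (by simp)

end SpreadLaw

theorem isCompact_spread {S : List ℕ → Bool}
    (hfin : ∀ n, {t : List ℕ | t.length = n ∧ S t = true}.Finite) : IsCompact (spread S) := by
  have hclosed : IsClosed (spread S) := by
    simp only [spread, Set.ofPred_forall]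
    exact isClosed_iInter fun n =>
      (isClosed_discrete {t | S t = true}).preimage (continuous_segN n)
  have hsub : spread S ⊆ Set.univ.pi fun n => (·.getD n 0) '' {t | t.length = n + 1 ∧ S t = true} :=
    fun α hα n _ => ⟨segN α (n + 1), ⟨length_segN α _, hα _⟩, getD_segN n.lt_add_one 0⟩
  exact (isCompact_univ_pi fun n => ((hfin (n + 1)).image _).isCompact).of_isClosed_subset
    hclosed hsub

/-- The Approximate-Fan Theorem, classical form (the restricted AppFT of Section 12):
in an explicit approximate fan, every thin bar is finite. -/
theorem approximate_fan_theorem (S : List ℕ → Bool)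
    (hspread : SpreadLaw S)
    (happ : ∃ g : ℕ → ℕ, ∀ n : ℕ,
      ¬ ∃ f : Fin (g n) → List ℕ, Function.Injective f ∧
        ∀ i, (f i).length = n ∧ S (f i) = true)
    (A : List ℕ → Bool) (hbar : ThinBar S A) :
    {t : List ℕ | A t = true}.Finite := by
  obtain ⟨g, hg⟩ := happ
  obtain ⟨hAS, hthin, hcover⟩ := hbar
  obtain ⟨B, hBA, hBfin, hBcover⟩ := (isCompact_spread fun n =>
      Set.finite_of_not_exists_injective_fin (hg n)).elim_finite_subcover_image
    (b := {t | A t = true}) (c := fun t => {α | segN α t.length = t})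
    (fun t _ => (isOpen_discrete {t}).preimage (continuous_segN _))
    (fun α hα => by
      obtain ⟨n, hn⟩ := hcover α hα
      exact Set.mem_biUnion hn (by simp))
  refine hBfin.subset fun a ha => ?_
  obtain ⟨α, hα, hαa⟩ := hspread.exists_mem_spread_segN_eq (hAS a ha)
  obtain ⟨t, htB, hαt : segN α t.length = t⟩ := Set.mem_iUnion₂.1 (hBcover hα)
  suffices t = a from this ▸ htB
  rcases le_total t.length a.length with h | h
  · exact hthin t a (hBA htB) ha (hαt ▸ hαa ▸ segN_prefix_segN α h)
  · exact (hthin a t ha (hBA htB) (hαa ▸ hαt ▸ segN_prefix_segN α h)).symm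
end

section
/- Thin bars in explicit fans are finite (the classical content of Theorem 12.4, FT ↔ 'in an explicit fan every thin bar is finite'): let S : List ℕ → Bool be a spread-law that is an explicit fan-law, i.e. there exists g : List ℕ → ℕ such that for all s : List ℕ and m : ℕ, S (s ++ [m]) = true → m ≤ g s. If A : List ℕ → Bool is a thin bar in F_S, then the set {t : List ℕ | A t = true} is finite. -/
theorem List.IsPrefix.exists_concat_prefix {α : Type*} {s t : List α} (h : s <+: t)
    (hne : s ≠ t) : ∃ m, s ++ [m] <+: t := by
  obtain ⟨_ | ⟨m, r⟩, rfl⟩ := h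
  · simp at hne
  · exact ⟨m, r, by simp⟩

theorem SpreadLaw.mem_of_prefix {S : List ℕ → Bool} (hS : SpreadLaw S) {t : List ℕ}
    (ht : S t = true) {u : List ℕ} (hu : u <+: t) : S u = true := by
  induction t using List.reverseRecOn with
  | nil => rwa [List.prefix_nil.mp hu]
  | append_singleton l m ih =>
    rcases List.prefix_concat_iff.mp hu with rfl | hul
    · exact ht
    · exact ih ((hS l).mpr ⟨m, ht⟩) hul

def subtreeAt (T : Set (List ℕ)) (s : List ℕ) : Set (List ℕ) := {t ∈ T | s <+: t}

section Konig

variable {T : Set (List ℕ)}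

theorem exists_infinite_subtreeAt_concat (hT : ∀ t ∈ T, ∀ u, u <+: t → u ∈ T)
    (hfin : ∀ s, {m | s ++ [m] ∈ T}.Finite) {s : List ℕ} (hs : (subtreeAt T s).Infinite) :
    ∃ m, (subtreeAt T (s ++ [m])).Infinite := by
  by_contra! hcon
  have hcover : subtreeAt T s ⊆ insert s (⋃ m ∈ {m | s ++ [m] ∈ T}, subtreeAt T (s ++ [m])) := by
    rintro t ⟨htT, hst⟩
    rcases eq_or_ne s t with rfl | hne
    · exact Set.mem_insert _ _
    obtain ⟨m, hm⟩ := hst.exists_concat_prefix hne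
    exact Set.mem_insert_of_mem _ (Set.mem_biUnion (hT t htT _ hm) ⟨htT, hm⟩)
  exact hs (((hfin s).biUnion fun m _ => hcon m).insert s |>.subset hcover)

theorem exists_branch_of_infinite (hT : ∀ t ∈ T, ∀ u, u <+: t → u ∈ T)
    (hfin : ∀ s, {m | s ++ [m] ∈ T}.Finite) (hinf : T.Infinite) :
    ∃ α : ℕ → ℕ, ∀ n, segN α n ∈ T := by
  have hstep : ∀ s, ∃ m, (subtreeAt T s).Infinite → (subtreeAt T (s ++ [m])).Infinite := by
    intro s
    by_cases hs : (subtreeAt T s).Infinite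
    · exact (exists_infinite_subtreeAt_concat hT hfin hs).imp fun _ h _ => h
    · exact ⟨0, fun h => absurd h hs⟩
  choose next hnext using hstep
  let path : ℕ → List ℕ := fun n => Nat.rec [] (fun _ p => p ++ [next p]) n
  have hpath_inf : ∀ n, (subtreeAt T (path n)).Infinite := by
    intro n
    induction n with
    | zero => exact hinf.mono fun t ht => ⟨ht, List.nil_prefix⟩
    | succ n ih => exact hnext _ ih
  have hseg : ∀ n, segN (fun n => next (path n)) n = path n := by
    intro n
    induction n with
    | zero => rfl
    | succ n ih => rw [segN_succ, ih]
  refine ⟨fun n => next (path n), fun n => ?_⟩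
  obtain ⟨t, htT, hpt⟩ := (hpath_inf n).nonempty
  exact hseg n ▸ hT t htT _ hpt

end Konig

def unbarredNodes (S A : List ℕ → Bool) : Set (List ℕ) :=
  {t | S t = true ∧ ∀ u, u <+: t → u ≠ t → A u = false}

theorem unbarredNodes_prefix_closed {S : List ℕ → Bool} (hS : SpreadLaw S) (A : List ℕ → Bool) :
    ∀ t ∈ unbarredNodes S A, ∀ u, u <+: t → u ∈ unbarredNodes S A := by
  rintro t ⟨htS, htA⟩ u hut
  refine ⟨hS.mem_of_prefix htS hut, fun v hvu hvne => htA v (hvu.trans hut) ?_⟩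
  rintro rfl
  exact hvne (hvu.eq_of_length (le_antisymm hvu.length_le hut.length_le))

theorem unbarredNodes_finite {S A : List ℕ → Bool} (hS : SpreadLaw S) {g : List ℕ → ℕ}
    (hg : ∀ s m, S (s ++ [m]) = true → m ≤ g s) (hbar : ∀ α : ℕ → ℕ,
      (∀ n, S (segN α n) = true) → ∃ n, A (segN α n) = true) :
    (unbarredNodes S A).Finite := by
  by_contra hinf
  have hfin : ∀ s, {m | s ++ [m] ∈ unbarredNodes S A}.Finite := fun s =>
    (Set.finite_Iic (g s)).subset fun m hm => hg s m hm.1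
  obtain ⟨α, hα⟩ := exists_branch_of_infinite (unbarredNodes_prefix_closed hS A) hfin hinf
  obtain ⟨n, hAn⟩ := hbar α fun n => (hα n).1
  have hproper : segN α n ≠ segN α (n + 1) := fun h => by
    simpa [segN] using congrArg List.length h
  have hnot_barred := (hα (n + 1)).2 (segN α n) (segN_succ α n ▸ List.prefix_append _ _) hproper
  simp [hAn] at hnot_barred

/-- Thin bars in explicit fans are finite (the classical content of Theorem 12.4). -/
theorem thin_bar_in_explicit_fan_finite (S : List ℕ → Bool)
    (hspread : SpreadLaw S)
    (hfan : ∃ g : List ℕ → ℕ, ∀ (s : List ℕ) (m : ℕ), S (s ++ [m]) = true → m ≤ g s)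
    (A : List ℕ → Bool) (hbar : ThinBar S A) :
    {t : List ℕ | A t = true}.Finite := by
  obtain ⟨g, hg⟩ := hfan
  obtain ⟨hAS, hthin, hcover⟩ := hbar
  refine (unbarredNodes_finite hspread hg hcover).subset fun t ht => ⟨hAS t ht, ?_⟩
  intro u hut hne
  by_contra hu
  exact hne (hthin u t (by simpa using hu) ht hut)
end
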